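/- Let (v, i) be a pivot such that v has a left child v.L in CT(P) and mfi(v,i) = [ℓ, r] ≠ [-∞,∞]. Then there exists an index j with ℓ ≤ j ≤ i-1 such that T[i] < T[j], R(v.L, j) < i, and ℓ ≤ L(v.L, j); in particular, mfi(v.L, j) ≠ [-∞,∞]. -/

import Mathlib

/-- Ordered binary trees (possibly empty). -/
inductive BTree : Type
  | nil : BTree
  | node : BTree → BTree → BTree
  deriving DecidableEq

/-- The minimum value of a list of integers (with default `0` for the empty list). -/
noncomputable def minval (l : List ℤ) : ℤ := l.minimum.untopD 0

/-- The 0-based index of the leftmost occurrence of the minimum value. -/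
noncomputable def minidx0 (l : List ℤ) : ℕ := l.idxOf (minval l)

theorem minidx0_lt_length {l : List ℤ} (h : l ≠ []) : minidx0 l < l.length := by
  obtain ⟨a, ha⟩ := WithTop.ne_top_iff_exists.mp (List.minimum_ne_top_of_ne_nil h)
  have hmem : a ∈ l := List.minimum_mem ha.symm
  have hval : minval l = a := by simp [minval, ← ha]
  rw [minidx0, hval]
  exact List.idxOf_lt_length_iff.mpr hmem

/-- The Cartesian tree of a string of integers. -/
noncomputable def CT (l : List ℤ) : BTree :=
  if h : l = [] then .nil
  else .node (CT (l.take (minidx0 l))) (CT (l.drop (minidx0 l + 1)))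
termination_by l.length
decreasing_by
  · have := minidx0_lt_length h
    simp [List.length_take]
    omega
  · have : 0 < l.length := List.length_pos_iff.mpr h
    simp [List.length_drop]
    omega

/-- The value of the 1-based position `i` of the string `T` (default `0`). -/
def val (T : List ℤ) (i : ℕ) : ℤ := T.getD (i - 1) 0

/-- `IsSubSeq n m I` : `I` is a strictly increasing sequence of `m` subscripts in `[1, n]`. -/
def IsSubSeq (n m : ℕ) (I : List ℕ) : Prop :=
  I.length = m ∧ I.Pairwise (· < ·) ∧ ∀ j ∈ I, 1 ≤ j ∧ j ≤ n

/-- The subsequence `T_I` of `T` selected by the (1-based) subscript sequence `I`. -/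
def seqAt (T : List ℤ) (I : List ℕ) : List ℤ := I.map (val T)

/-- The substring `P[a..b]` of `P` (1-based, inclusive). -/
def subslice (P : List ℤ) (a b : ℕ) : List ℤ := (P.take b).drop (a - 1)

/-- The left end of the maximal interval around position `v` in which `P[v]` is minimal:
one plus the rightmost position `j < v` carrying a value smaller than `P[v]` (or `1`). -/
def leftEnd (P : List ℤ) (v : ℕ) : ℕ :=
  (((Finset.Icc 1 (v - 1)).filter (fun j => val P j < val P v)).max.unbotD 0) + 1

/-- The right end of the maximal interval around position `v` in which `P[v]` is minimal:
the leftmost position `j > v` carrying a value smaller than `P[v]`, minus one (or `|P|`). -/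
def rightEnd (P : List ℤ) (v : ℕ) : ℕ :=
  (((Finset.Icc (v + 1) P.length).filter (fun j => val P j < val P v)).min.untopD
    (P.length + 1)) - 1

/-- `P_v`: the substring of `P` spanned by the subtree of `CT(P)` rooted at node `v`
(nodes are identified with 1-based positions of `P`). -/
def Psub (P : List ℤ) (v : ℕ) : List ℤ := subslice P (leftEnd P v) (rightEnd P v)

/-- The left child `v.L` of node `v` in `CT(P)` (as a 1-based position), if it exists. -/
noncomputable def leftChild (P : List ℤ) (v : ℕ) : Option ℕ :=
  if leftEnd P v < v then some (leftEnd P v + minidx0 (subslice P (leftEnd P v) (v - 1)))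
  else none

/-- The right child `v.R` of node `v` in `CT(P)` (as a 1-based position), if it exists. -/
noncomputable def rightChild (P : List ℤ) (v : ℕ) : Option ℕ :=
  if v < rightEnd P v then some (v + 1 + minidx0 (subslice P (v + 1) (rightEnd P v)))
  else none

/-- `[ℓ, r]` is a fixed-interval with pivot `(v, i)`. -/
def IsFixedInterval (T P : List ℤ) (v i ℓ r : ℕ) : Prop :=
  1 ≤ ℓ ∧ r ≤ T.length ∧
    ∃ I : List ℕ, IsSubSeq T.length (Psub P v).length I ∧ i ∈ I ∧
      (∀ j ∈ I, ℓ ≤ j ∧ j ≤ r) ∧ CT (seqAt T I) = CT (Psub P v) ∧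
      val T i = minval (seqAt T I)

/-- `IntervalSsubset (ℓ', r') (ℓ, r)` : the interval `[ℓ', r']` is strictly contained
in the interval `[ℓ, r]`. -/
def IntervalSsubset (p q : ℕ × ℕ) : Prop := q.1 ≤ p.1 ∧ p.2 ≤ q.2 ∧ p ≠ q

/-- `[ℓ, r]` is a minimal fixed-interval with pivot `(v, i)`. -/
def IsMinFixedInterval (T P : List ℤ) (v i ℓ r : ℕ) : Prop :=
  IsFixedInterval T P v i ℓ r ∧
    ¬∃ ℓ' r', IsFixedInterval T P v i ℓ' r' ∧ IntervalSsubset (ℓ', r') (ℓ, r)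

open Classical in
/-- The left endpoint `L(v, i)` of the minimal fixed-interval `mfi(v, i)`,
which is `-∞` (i.e. `⊥`) if no (minimal) fixed-interval with pivot `(v, i)` exists. -/
noncomputable def mfiL (T P : List ℤ) (v i : ℕ) : WithBot ℕ :=
  if h : ∃ ℓ r, IsMinFixedInterval T P v i ℓ r then (h.choose : WithBot ℕ) else ⊥

open Classical in
/-- The right endpoint `R(v, i)` of the minimal fixed-interval `mfi(v, i)`,
which is `∞` (i.e. `⊤`) if no (minimal) fixed-interval with pivot `(v, i)` exists. -/
noncomputable def mfiR (T P : List ℤ) (v i : ℕ) : WithTop ℕ :=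
  if h : ∃ ℓ r, IsMinFixedInterval T P v i ℓ r then (h.choose_spec.choose : WithTop ℕ) else ⊤

/-- `I` is a trace of pattern `P` in text `T`. -/
def IsTrace (T P : List ℤ) (I : List ℕ) : Prop :=
  IsSubSeq T.length P.length I ∧ CT (seqAt T I) = CT P

/-- `[ℓ, r]` is an occurrence interval for `P` over `T`. -/
def IsOccInterval (T P : List ℤ) (ℓ r : ℕ) : Prop :=
  1 ≤ ℓ ∧ r ≤ T.length ∧ ∃ I, IsTrace T P I ∧ ∀ j ∈ I, ℓ ≤ j ∧ j ≤ r

/-- `[ℓ, r]` is a minimal occurrence interval for `P` over `T`. -/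
def IsMinOccInterval (T P : List ℤ) (ℓ r : ℕ) : Prop :=
  IsOccInterval T P ℓ r ∧
    ¬∃ ℓ' r', IsOccInterval T P ℓ' r' ∧ IntervalSsubset (ℓ', r') (ℓ, r)

/-!
Split a trace of `P_v` at its minimum `T[i]`: by the recursive definition of Cartesian trees,
the part left of `i` is a trace of `P_{v.L}` lying in `[ℓ, i - 1]`, so its minimum position `j`
is a pivot for `v.L` with fixed-interval `[ℓ, i - 1]`. The intersection of two fixed-intervals
with the same pivot is again one, so the minimal fixed-interval is unique and
`mfi(v.L, j) ⊆ [ℓ, i - 1]`.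
-/

section FinsetBounds

variable {α : Type*} [LinearOrder α] {s : Finset α} {d x : α}

theorem le_max_unbotD_of_mem (hx : x ∈ s) : x ≤ s.max.unbotD d := by
  have hle := Finset.le_max hx
  cases h : s.max using WithBot.recBotCoe with
  | bot => simp [h] at hle
  | coe m => simpa [h] using hle

theorem max_unbotD_mem (h : s.max.unbotD d ≠ d) : s.max.unbotD d ∈ s := by
  cases hmax : s.max using WithBot.recBotCoe with
  | bot => simp [hmax] at h
  | coe m => simpa using Finset.mem_of_max hmax

theorem min_untopD_le_of_mem (hx : x ∈ s) : s.min.untopD d ≤ x := by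
  have hle := Finset.min_le hx
  cases h : s.min using WithTop.recTopCoe with
  | top => simp [h] at hle
  | coe m => simpa [h] using hle

theorem min_untopD_mem (h : s.min.untopD d ≠ d) : s.min.untopD d ∈ s := by
  cases hmin : s.min using WithTop.recTopCoe with
  | top => simp [hmin] at h
  | coe m => simpa using Finset.mem_of_min hmin

end FinsetBounds

theorem minval_eq_of_mem {l : List ℤ} {a : ℤ} (ha : a ∈ l) (hle : ∀ b ∈ l, a ≤ b) :
    minval l = a := by
  simp [minval, List.minimum_eq_coe_iff.mpr ⟨ha, hle⟩]

theorem minval_mem_and_le {l : List ℤ} (h : l ≠ []) : minval l ∈ l ∧ ∀ b ∈ l, minval l ≤ b := by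
  obtain ⟨a, ha⟩ := WithTop.ne_top_iff_exists.mp (List.minimum_ne_top_of_ne_nil h)
  have ha' := List.minimum_eq_coe_iff.mp ha.symm
  rwa [minval_eq_of_mem ha'.1 ha'.2]

theorem minval_mem {l : List ℤ} (h : l ≠ []) : minval l ∈ l :=
  (minval_mem_and_le h).1

theorem minval_le {l : List ℤ} {a : ℤ} (ha : a ∈ l) : minval l ≤ a :=
  (minval_mem_and_le (List.ne_nil_of_mem ha)).2 a ha

theorem getElem_minidx0 {l : List ℤ} (h : l ≠ []) :
    l[minidx0 l]'(minidx0_lt_length h) = minval l :=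
  List.getElem_idxOf _

theorem CT_nil : CT [] = .nil := by
  rw [CT]; rfl

theorem CT_append_cons {A B : List ℤ} {x : ℤ} (hA : ∀ y ∈ A, x < y) (hB : ∀ y ∈ B, x ≤ y) :
    CT (A ++ x :: B) = .node (CT A) (CT B) := by
  have hmin : minval (A ++ x :: B) = x := by
    refine minval_eq_of_mem (by simp) fun y hy => ?_
    rcases List.mem_append.mp hy with hy | hy
    · exact (hA y hy).le
    · rcases List.mem_cons.mp hy with rfl | hy
      exacts [le_rfl, hB y hy]
  have hidx : minidx0 (A ++ x :: B) = A.length := by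
    rw [minidx0, hmin, List.idxOf_append_of_notMem fun hx => (hA x hx).false,
      List.idxOf_cons_self, add_zero]
  rw [CT, dif_neg (by simp), hidx, List.take_left, List.append_cons, List.drop_left' (by simp)]

def BTree.size : BTree → ℕ
  | .nil => 0
  | .node a b => a.size + b.size + 1

theorem size_CT (l : List ℤ) : (CT l).size = l.length := by
  induction l using CT.induct with
  | case1 => rw [CT_nil]; rfl
  | case2 l hl ihA ihB =>
    rw [CT, dif_neg hl, BTree.size, ihA, ihB, List.length_take, List.length_drop,
      min_eq_left (minidx0_lt_length hl).le]
    have := minidx0_lt_length hl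
    omega

theorem length_eq_of_CT_eq {l₁ l₂ : List ℤ} (h : CT l₁ = CT l₂) : l₁.length = l₂.length := by
  rw [← size_CT, ← size_CT, h]

theorem pairwise_lt_append_cons {A B : List ℕ} {a : ℕ} (h : (A ++ a :: B).Pairwise (· < ·)) :
    A.Pairwise (· < ·) ∧ (a :: B).Pairwise (· < ·) ∧ (∀ x ∈ A, x < a) ∧ ∀ y ∈ B, a < y := by
  obtain ⟨hA, haB, hcross⟩ := List.pairwise_append.mp h
  exact ⟨hA, haB, fun x hx => hcross x hx a List.mem_cons_self, (List.pairwise_cons.mp haB).1⟩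

theorem val_ne_val {T : List ℤ} (hT : T.Nodup) {x y : ℕ} (hx : 1 ≤ x ∧ x ≤ T.length)
    (hy : 1 ≤ y ∧ y ≤ T.length) (hxy : x ≠ y) : val T x ≠ val T y := by
  rw [val, val, List.getD_eq_getElem _ _ (by omega), List.getD_eq_getElem _ _ (by omega),
    Ne, hT.getElem_inj_iff]
  omega

theorem CT_seqAt_append_cons {T : List ℤ} (hT : T.Nodup) {A B : List ℕ} {a : ℕ}
    (hs : (A ++ a :: B).Pairwise (· < ·)) (hb : ∀ j ∈ A ++ a :: B, 1 ≤ j ∧ j ≤ T.length)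
    (hmin : val T a = minval (seqAt T (A ++ a :: B))) :
    CT (seqAt T (A ++ a :: B)) = .node (CT (seqAt T A)) (CT (seqAt T B)) := by
  have hle : ∀ x ∈ A ++ a :: B, val T a ≤ val T x := fun x hx =>
    hmin ▸ minval_le (List.mem_map_of_mem hx)
  have hltA := (pairwise_lt_append_cons hs).2.2.1
  simp only [seqAt, List.map_append, List.map_cons]
  refine CT_append_cons (fun y hy => ?_) (fun y hy => ?_)
  · obtain ⟨x, hx, rfl⟩ := List.mem_map.mp hy
    exact (hle x (by simp [hx])).lt_of_ne
      (val_ne_val hT (hb a (by simp)) (hb x (by simp [hx])) (hltA x hx).ne')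
  · obtain ⟨x, hx, rfl⟩ := List.mem_map.mp hy
    exact hle x (by simp [hx])

section FixedInterval

variable {T P : List ℤ} {w a ℓ r ℓ₁ r₁ ℓ₂ r₂ : ℕ}

theorem IsFixedInterval.pivot_mem_Icc (h : IsFixedInterval T P w a ℓ r) : a ∈ Set.Icc ℓ r := by
  obtain ⟨-, -, I, -, ha, hbnd, -⟩ := h
  exact hbnd a ha

/-- Both traces split at the pivot into halves whose Cartesian trees match, so the left half of
the second trace and the right half of the first glue to a new trace. -/
theorem IsFixedInterval.glue (hT : T.Nodup) (h₁ : IsFixedInterval T P w a ℓ₁ r₁)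
    (h₂ : IsFixedInterval T P w a ℓ₂ r₂) : IsFixedInterval T P w a ℓ₂ r₁ := by
  obtain ⟨-, hr₁, I₁, ⟨hlen₁, hs₁, hb₁⟩, ha₁, hbnd₁, hct₁, hv₁⟩ := h₁
  obtain ⟨hℓ₂, -, I₂, ⟨-, hs₂, hb₂⟩, ha₂, hbnd₂, hct₂, hv₂⟩ := h₂
  obtain ⟨A₁, B₁, rfl⟩ := List.append_of_mem ha₁
  obtain ⟨A₂, B₂, rfl⟩ := List.append_of_mem ha₂
  obtain ⟨-, haB₁, -, hB₁⟩ := pairwise_lt_append_cons hs₁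
  obtain ⟨hsA₂, -, hA₂, -⟩ := pairwise_lt_append_cons hs₂
  obtain ⟨hctA, -⟩ := BTree.node.inj <|
    (CT_seqAt_append_cons hT hs₂ hb₂ hv₂).symm.trans <| hct₂.trans <| hct₁.symm.trans
      (CT_seqAt_append_cons hT hs₁ hb₁ hv₁)
  have hlenA : A₂.length = A₁.length := by
    simpa [seqAt] using length_eq_of_CT_eq hctA
  have hs : (A₂ ++ a :: B₁).Pairwise (· < ·) :=
    List.pairwise_append.mpr ⟨hsA₂, haB₁, fun x hx y hy =>
      (List.mem_cons.mp hy).elim (· ▸ hA₂ x hx) fun hy => (hA₂ x hx).trans (hB₁ y hy)⟩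
  have hmem : ∀ x ∈ A₂ ++ a :: B₁, x ∈ A₂ ++ a :: B₂ ∨ x ∈ A₁ ++ a :: B₁ := by
    intro x hx
    simp only [List.mem_append, List.mem_cons] at hx ⊢
    tauto
  have hb : ∀ x ∈ A₂ ++ a :: B₁, 1 ≤ x ∧ x ≤ T.length := fun x hx =>
    (hmem x hx).elim (hb₂ x) (hb₁ x)
  have hmin : val T a = minval (seqAt T (A₂ ++ a :: B₁)) := by
    refine (minval_eq_of_mem (List.mem_map_of_mem (by simp)) fun y hy => ?_).symm
    obtain ⟨x, hx, rfl⟩ := List.mem_map.mp hy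
    rcases hmem x hx with hx | hx
    · exact hv₂ ▸ minval_le (List.mem_map_of_mem hx)
    · exact hv₁ ▸ minval_le (List.mem_map_of_mem hx)
  refine ⟨hℓ₂, hr₁, A₂ ++ a :: B₁, ⟨?_, hs, hb⟩, by simp, fun x hx => ?_, ?_, hmin⟩
  · simp [← hlen₁, hlenA]
  · rcases List.mem_append.mp hx with hx | hx
    · exact ⟨(hbnd₂ x (by simp [hx])).1, (hA₂ x hx).le.trans (hbnd₁ a (by simp)).2⟩
    · rcases List.mem_cons.mp hx with rfl | hx
      · exact ⟨(hbnd₂ x (by simp)).1, (hbnd₁ x (by simp)).2⟩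
      · exact ⟨(hbnd₂ a (by simp)).1.trans (hB₁ x hx).le, (hbnd₁ x (by simp [hx])).2⟩
  · rw [CT_seqAt_append_cons hT hs hb hmin, hctA, ← CT_seqAt_append_cons hT hs₁ hb₁ hv₁, hct₁]

theorem IsFixedInterval.inter (hT : T.Nodup) (h₁ : IsFixedInterval T P w a ℓ₁ r₁)
    (h₂ : IsFixedInterval T P w a ℓ₂ r₂) :
    IsFixedInterval T P w a (max ℓ₁ ℓ₂) (min r₁ r₂) := by
  rcases le_total ℓ₁ ℓ₂ with hℓ | hℓ <;> rcases le_total r₁ r₂ with hr | hr <;>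
    simp only [max_eq_left, max_eq_right, min_eq_left, min_eq_right, hℓ, hr]
  exacts [h₁.glue hT h₂, h₂, h₁, h₂.glue hT h₁]

theorem IsMinFixedInterval.le_of_isFixedInterval (hT : T.Nodup)
    (hmin : IsMinFixedInterval T P w a ℓ r) (h : IsFixedInterval T P w a ℓ₁ r₁) :
    ℓ₁ ≤ ℓ ∧ r ≤ r₁ := by
  have heq : (max ℓ ℓ₁, min r r₁) = (ℓ, r) := by
    by_contra hne
    exact hmin.2 ⟨_, _, hmin.1.inter hT h, le_max_left _ _, min_le_left _ _, hne⟩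
  simp only [Prod.mk.injEq, max_eq_left_iff, min_eq_left_iff] at heq
  exact heq

theorem IsFixedInterval.exists_isMinFixedInterval (h : IsFixedInterval T P w a ℓ r) :
    ∃ ℓ' r', IsMinFixedInterval T P w a ℓ' r' := by
  obtain ⟨⟨ℓ', r'⟩, hF, hnarrowest⟩ := (measure fun p : ℕ × ℕ => p.2 - p.1).wf.has_min
    {p | IsFixedInterval T P w a p.1 p.2} ⟨(ℓ, r), h⟩
  refine ⟨ℓ', r', hF, fun ⟨ℓ'', r'', hF', hℓ, hr, hne⟩ => hnarrowest (ℓ'', r'') hF' ?_⟩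
  obtain ⟨hℓa, har⟩ := hF'.pivot_mem_Icc
  simp only [ne_eq, Prod.mk.injEq] at hne
  show r'' - ℓ'' < r' - ℓ'
  omega

theorem IsFixedInterval.le_mfiL_and_mfiR_le (hT : T.Nodup) (h : IsFixedInterval T P w a ℓ r) :
    (ℓ : WithBot ℕ) ≤ mfiL T P w a ∧ mfiR T P w a ≤ (r : WithTop ℕ) := by
  have hex := h.exists_isMinFixedInterval
  obtain ⟨hℓ, hr⟩ := hex.choose_spec.choose_spec.le_of_isFixedInterval hT h
  rw [mfiL, mfiR, dif_pos hex, dif_pos hex]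
  exact ⟨WithBot.coe_le_coe.mpr hℓ, WithTop.coe_le_coe.mpr hr⟩

end FixedInterval

section PatternIntervals

variable {P : List ℤ} {v j : ℕ}

theorem one_le_leftEnd : 1 ≤ leftEnd P v := Nat.le_add_left 1 _

theorem val_le_of_leftEnd_le (h₁ : leftEnd P v ≤ j) (h₂ : j < v) : val P v ≤ val P j := by
  by_contra! hlt
  have hj := le_max_unbotD_of_mem (d := 0) (s := (Finset.Icc 1 (v - 1)).filter
    (fun j => val P j < val P v)) (x := j)
    (Finset.mem_filter.mpr ⟨Finset.mem_Icc.mpr ⟨one_le_leftEnd.trans h₁, by omega⟩, hlt⟩)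
  simp only [leftEnd] at h₁
  omega

theorem val_pred_leftEnd_lt (h : 2 ≤ leftEnd P v) :
    leftEnd P v - 1 < v ∧ val P (leftEnd P v - 1) < val P v := by
  simp only [leftEnd] at h ⊢
  have hmem := max_unbotD_mem (d := 0) (s := (Finset.Icc 1 (v - 1)).filter
    (fun j => val P j < val P v)) (by omega)
  simp only [Finset.mem_filter, Finset.mem_Icc] at hmem
  simp only [Nat.add_sub_cancel]
  exact ⟨by omega, hmem.2⟩

theorem leftEnd_eq {c : ℕ} (hc : 1 ≤ c) (hcv : c ≤ v)
    (hout : 2 ≤ c → val P (c - 1) < val P v) (hin : ∀ x, c ≤ x → x < v → val P v < val P x) :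
    leftEnd P v = c := by
  have := one_le_leftEnd (P := P) (v := v)
  rcases lt_trichotomy (leftEnd P v) c with hlt | heq | hgt
  · exact absurd (val_le_of_leftEnd_le (j := c - 1) (by omega) (by omega)) (hout (by omega)).not_ge
  · exact heq
  · obtain ⟨hlt, hval⟩ := val_pred_leftEnd_lt (P := P) (v := v) (by omega)
    exact absurd (hin _ (by omega) hlt) hval.not_gt

theorem rightEnd_le_length : rightEnd P v ≤ P.length := by
  have hs : ((Finset.Icc (v + 1) P.length).filter (fun j => val P j < val P v)).min.untopD
      (P.length + 1) ≤ P.length + 1 := by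
    by_cases h : ((Finset.Icc (v + 1) P.length).filter (fun j => val P j < val P v)).min.untopD
      (P.length + 1) = P.length + 1
    · exact h.le
    · have := min_untopD_mem h
      simp only [Finset.mem_filter, Finset.mem_Icc] at this
      omega
  simp only [rightEnd]
  omega

theorem val_le_of_le_rightEnd (h₁ : v < j) (h₂ : j ≤ rightEnd P v) : val P v ≤ val P j := by
  have hjP := h₂.trans rightEnd_le_length
  by_contra! hlt
  have hj := min_untopD_le_of_mem (d := P.length + 1) (s := (Finset.Icc (v + 1) P.length).filter
    (fun j => val P j < val P v)) (x := j)
    (Finset.mem_filter.mpr ⟨Finset.mem_Icc.mpr ⟨by omega, hjP⟩, hlt⟩)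
  simp only [rightEnd] at h₂
  omega

theorem val_succ_rightEnd_lt (h : rightEnd P v < P.length) :
    v < rightEnd P v + 1 ∧ val P (rightEnd P v + 1) < val P v := by
  simp only [rightEnd] at h ⊢
  have hmem := min_untopD_mem (d := P.length + 1) (s := (Finset.Icc (v + 1) P.length).filter
    (fun j => val P j < val P v)) (by omega)
  simp only [Finset.mem_filter, Finset.mem_Icc] at hmem
  rw [Nat.sub_add_cancel (by omega)]
  exact ⟨by omega, hmem.2⟩

theorem rightEnd_eq {d : ℕ} (hvd : v ≤ d) (hd : d ≤ P.length)
    (hout : d < P.length → val P (d + 1) < val P v)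
    (hin : ∀ x, v < x → x ≤ d → val P v < val P x) :
    rightEnd P v = d := by
  have hre := rightEnd_le_length (P := P) (v := v)
  rcases lt_trichotomy (rightEnd P v) d with hlt | heq | hgt
  · obtain ⟨hvlt, hval⟩ := val_succ_rightEnd_lt (P := P) (v := v) (by omega)
    exact absurd (hin _ hvlt (by omega)) hval.not_gt
  · exact heq
  · exact absurd (val_le_of_le_rightEnd (j := d + 1) (by omega) (by omega))
      (hout (by omega)).not_ge

theorem subslice_eq_map_range' {a b : ℕ} (ha : 1 ≤ a) (hb : b ≤ P.length) :
    subslice P a b = (List.range' a (b + 1 - a)).map (val P) := by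
  refine List.ext_getElem (by simp [subslice]; omega) fun t h₁ h₂ => ?_
  simp only [subslice, List.length_drop, List.length_take] at h₁
  simp only [subslice, List.getElem_drop, List.getElem_take, List.getElem_map,
    List.getElem_range', val]
  rw [List.getD_eq_getElem _ _ (by omega)]
  congr 1
  omega

end PatternIntervals

theorem CT_Psub_eq_node_of_leftChild {P : List ℤ} (hP : P.Nodup) {v u : ℕ}
    (hv : v ≤ P.length) (hu : leftChild P v = some u) :
    Psub P u ≠ [] ∧ ∃ Y, CT (Psub P v) = .node (CT (Psub P u)) Y := by
  rw [leftChild] at hu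
  split_ifs at hu with hav
  obtain rfl := Option.some.inj hu
  set a := leftEnd P v
  set b := rightEnd P v
  have ha : 1 ≤ a := one_le_leftEnd
  have hb : b ≤ P.length := rightEnd_le_length
  have hvb : v ≤ b := by
    by_contra! hbv
    exact (val_succ_rightEnd_lt (P := P) (v := v) (by omega)).1.not_ge (by omega)
  have hS : subslice P a (v - 1) = (List.range' a (v - a)).map (val P) := by
    rw [subslice_eq_map_range' ha (by omega)]
    congr 2
    omega
  have hSne : subslice P a (v - 1) ≠ [] := by simp [hS]; omega
  set k := minidx0 (subslice P a (v - 1))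
  have hk : k < v - a := (minidx0_lt_length hSne).trans_eq (by simp [hS])
  have hPu_min : val P (a + k) = minval (subslice P a (v - 1)) := by
    rw [← getElem_minidx0 hSne]
    simp [hS, k]
  have hPv_lt : ∀ t, a ≤ t → t < v → val P v < val P t := fun t h₁ h₂ =>
    (val_le_of_leftEnd_le h₁ h₂).lt_of_ne
      (val_ne_val hP ⟨by omega, hv⟩ ⟨by omega, by omega⟩ (by omega))
  have hPu_lt : ∀ t, a ≤ t → t < v → t ≠ a + k → val P (a + k) < val P t := by
    intro t h₁ h₂ hne
    refine (hPu_min ▸ minval_le ?_ : _ ≤ _).lt_of_ne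
      (val_ne_val hP ⟨by omega, by omega⟩ ⟨by omega, by omega⟩ (Ne.symm hne))
    simp only [hS, List.mem_map, List.mem_range'_1]
    exact ⟨t, ⟨h₁, by omega⟩, rfl⟩
  have hPsub_u : Psub P (a + k) = subslice P a (v - 1) := by
    have hleft : leftEnd P (a + k) = a := leftEnd_eq ha (by omega)
      (fun h => (val_pred_leftEnd_lt h).2.trans (hPv_lt _ (by omega) (by omega)))
      (fun x h₁ h₂ => hPu_lt x h₁ (by omega) (by omega))
    have hright : rightEnd P (a + k) = v - 1 := rightEnd_eq (by omega) (by omega)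
      (fun _ => by rw [Nat.sub_add_cancel (by omega)]; exact hPv_lt _ (by omega) (by omega))
      (fun x h₁ h₂ => hPu_lt x (by omega) (by omega) (by omega))
    rw [Psub, hleft, hright]
  have hPsub_v : Psub P v =
      subslice P a (v - 1) ++ val P v :: (List.range' (v + 1) (b - v)).map (val P) := by
    have hsplit :
        List.range' a (b + 1 - a) = List.range' a (v - a) ++ List.range' v (b - v + 1) :=
      List.range'_eq_append_iff.mpr ⟨v - a, by omega, rfl, by congr 1 <;> omega⟩
    rw [Psub, subslice_eq_map_range' ha hb, hsplit, List.range'_succ, List.map_append,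
      List.map_cons, hS]
  refine ⟨hPsub_u ▸ hSne, CT ((List.range' (v + 1) (b - v)).map (val P)), ?_⟩
  rw [hPsub_v, hPsub_u, CT_append_cons]
  · intro y hy
    simp only [hS, List.mem_map, List.mem_range'_1] at hy
    obtain ⟨t, ht, rfl⟩ := hy
    exact hPv_lt t ht.1 (by omega)
  · intro y hy
    simp only [List.mem_map, List.mem_range'_1] at hy
    obtain ⟨t, ht, rfl⟩ := hy
    exact val_le_of_le_rightEnd (by omega) (by omega)

theorem IsFixedInterval.exists_leftChild {T P : List ℤ} (hT : T.Nodup) (hP : P.Nodup)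
    {v u i ℓ r : ℕ} (hv : v ≤ P.length) (hu : leftChild P v = some u)
    (h : IsFixedInterval T P v i ℓ r) :
    ∃ j, ℓ ≤ j ∧ j < i ∧ val T i < val T j ∧ IsFixedInterval T P u j ℓ (i - 1) := by
  obtain ⟨hℓ, -, I, ⟨-, hs, hb⟩, hi, hbnd, hct, hval⟩ := h
  obtain ⟨A, B, rfl⟩ := List.append_of_mem hi
  obtain ⟨hsA, -, hA, -⟩ := pairwise_lt_append_cons hs
  obtain ⟨hne, Y, hPv⟩ := CT_Psub_eq_node_of_leftChild hP hv hu
  obtain ⟨hctA, -⟩ := BTree.node.inj <|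
    (CT_seqAt_append_cons hT hs hb hval).symm.trans (hct.trans hPv)
  have hlenA : A.length = (Psub P u).length := by
    simpa [seqAt] using length_eq_of_CT_eq hctA
  have hAne : seqAt T A ≠ [] := by
    rw [Ne, seqAt, List.map_eq_nil_iff]
    rintro rfl
    exact hne (List.eq_nil_of_length_eq_zero hlenA.symm)
  obtain ⟨j, hjA, hj⟩ := List.mem_map.mp (minval_mem hAne)
  have hmemI : ∀ x ∈ A, x ∈ A ++ i :: B := fun x hx => List.mem_append_left _ hx
  have hiT := hb i (by simp)
  refine ⟨j, (hbnd j (hmemI j hjA)).1, hA j hjA, ?_, hℓ, by omega, A,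
    ⟨hlenA, hsA, fun x hx => hb x (hmemI x hx)⟩, hjA,
    fun x hx => ⟨(hbnd x (hmemI x hx)).1, by have := hA x hx; omega⟩, hctA, hj⟩
  exact (hval ▸ minval_le (List.mem_map_of_mem (hmemI j hjA))).lt_of_ne
    (val_ne_val hT hiT (hb j (hmemI j hjA)) (hA j hjA).ne')

theorem exists_left_witness_general
    (T P : List ℤ) (hT : T.Nodup) (hP : P.Nodup)
    (v i : ℕ) (hv : 1 ≤ v ∧ v ≤ P.length)
    (u : ℕ) (hu : leftChild P v = some u) (ℓ r : ℕ)
    (h : IsMinFixedInterval T P v i ℓ r) :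
    ∃ j, ℓ ≤ j ∧ j ≤ i - 1 ∧ val T i < val T j ∧
      mfiR T P u j < (i : WithTop ℕ) ∧ (ℓ : WithBot ℕ) ≤ mfiL T P u j ∧
      ∃ ℓ' r', IsMinFixedInterval T P u j ℓ' r' := by
  obtain ⟨j, hℓj, hji, hval, hF⟩ := h.1.exists_leftChild hT hP hv.2 hu
  obtain ⟨hL, hR⟩ := hF.le_mfiL_and_mfiR_le hT
  have hi : ((i - 1 : ℕ) : WithTop ℕ) < i := WithTop.coe_lt_coe.mpr (show i - 1 < i by omega)
  exact ⟨j, hℓj, by omega, hval, hR.trans_lt hi, hL, hF.exists_isMinFixedInterval⟩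

/-- If `v` has a left child `v.L = u` in `CT(P)` and
`mfi(v,i) = [ℓ, r] ≠ [-∞,∞]`, then there exists an index `j` with `ℓ ≤ j ≤ i-1` such that
`T[i] < T[j]`, `R(v.L, j) < i`, and `ℓ ≤ L(v.L, j)`; in particular,
`mfi(v.L, j) ≠ [-∞,∞]`. -/
theorem exists_left_witness
    (T P : List ℤ) (hT : T.Nodup) (hP : P.Nodup)
    (hm : 1 ≤ P.length) (hmn : P.length ≤ T.length)
    (v i : ℕ) (hv : 1 ≤ v ∧ v ≤ P.length) (hi : 1 ≤ i ∧ i ≤ T.length)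
    (u : ℕ) (hu : leftChild P v = some u) (ℓ r : ℕ)
    (h : IsMinFixedInterval T P v i ℓ r) :
    ∃ j, ℓ ≤ j ∧ j ≤ i - 1 ∧ val T i < val T j ∧
      mfiR T P u j < (i : WithTop ℕ) ∧ (ℓ : WithBot ℕ) ≤ mfiL T P u j ∧
      ∃ ℓ' r', IsMinFixedInterval T P u j ℓ' r' :=
  exists_left_witness_general T P hT hP v i hv u hu ℓ r h
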